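/- There exists a constant C_m > 0, independent of s, such that for all s ∈ [0,b) one has |m_s| ≤ C_m. -/

import Mathlib

open Real Set Filter MeasureTheory
open scoped ContDiff

/-- `J(x) = ∏ i sinh (cᵢ x)`. -/
noncomputable def Jfun (r : ℕ) (c : Fin r → ℝ) (x : ℝ) : ℝ :=
  ∏ i, Real.sinh (c i * x)

/-- `j = - log J`. -/
noncomputable def jfun (r : ℕ) (c : Fin r → ℝ) (x : ℝ) : ℝ :=
  - Real.log (Jfun r c x)

/-- A solution at level `s`: a smooth even function `u` with `u'' > 0`, whose derivative
maps `[0,∞)` onto `[0, λ - s)`, satisfying `u'' v(u') = e^{-2u} J` on `(0,∞)`. -/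
def IsSolution (r : ℕ) (c : Fin r → ℝ) (v : ℝ → ℝ) (lam s : ℝ) (u : ℝ → ℝ) : Prop :=
  ContDiff ℝ (⊤ : ℕ∞) u ∧ (∀ x, u (-x) = u x) ∧ (∀ x, 0 < deriv (deriv u) x) ∧
  deriv u '' Set.Ici (0:ℝ) = Set.Ico 0 (lam - s) ∧
  ∀ x, 0 < x → deriv (deriv u) x * v (deriv u x) = Real.exp (-(2 * u x)) * Jfun r c x

noncomputable def jdfun (r : ℕ) (c : Fin r → ℝ) (x : ℝ) : ℝ :=
  -∑ i, Real.cosh (c i * x) * c i / Real.sinh (c i * x)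

lemma Jfun_pos {r : ℕ} {c : Fin r → ℝ} (hc : ∀ i, 0 < c i) {x : ℝ} (hx : 0 < x) :
    0 < Jfun r c x :=
  Finset.prod_pos fun i _ => Real.sinh_pos_iff.2 (mul_pos (hc i) hx)

lemma jfun_eq {r : ℕ} {c : Fin r → ℝ} (hc : ∀ i, 0 < c i) {x : ℝ} (hx : 0 < x) :
    jfun r c x = -∑ i, Real.log (Real.sinh (c i * x)) := by
  unfold jfun Jfun
  rw [Real.log_prod (fun i _ => (Real.sinh_pos_iff.2 (mul_pos (hc i) hx)).ne')]

lemma hasDerivAt_jfun {r : ℕ} {c : Fin r → ℝ} (hc : ∀ i, 0 < c i) {x : ℝ} (hx : 0 < x) :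
    HasDerivAt (jfun r c) (jdfun r c x) x := by
  have h : ∀ i : Fin r, HasDerivAt (fun t => Real.log (Real.sinh (c i * t)))
      (Real.cosh (c i * x) * c i / Real.sinh (c i * x)) x := by
    intro i
    have h1 : HasDerivAt (fun t : ℝ => c i * t) (c i) x := by
      simpa using (hasDerivAt_id x).const_mul (c i)
    have h2 : HasDerivAt (fun t => Real.sinh (c i * t)) (Real.cosh (c i * x) * c i) x :=
      (Real.hasDerivAt_sinh (c i * x)).comp x h1
    exact h2.log (Real.sinh_pos_iff.2 (mul_pos (hc i) hx)).ne'
  have hsum : HasDerivAt (fun t => -∑ i, Real.log (Real.sinh (c i * t)))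
      (jdfun r c x) x := by
    unfold jdfun
    exact (HasDerivAt.fun_sum (fun i _ => h i)).neg
  exact hsum.congr_of_eventuallyEq <|
    Filter.eventuallyEq_of_mem (Ioi_mem_nhds hx) (fun t ht => jfun_eq hc ht)

lemma jdfun_mono {r : ℕ} {c : Fin r → ℝ} (hc : ∀ i, 0 < c i) :
    ∀ ⦃x y : ℝ⦄, 0 < x → x ≤ y → jdfun r c x ≤ jdfun r c y := by
  intro x y hx hxy
  unfold jdfun
  apply neg_le_neg
  apply Finset.sum_le_sum
  intro i _
  have hsx : 0 < Real.sinh (c i * x) := Real.sinh_pos_iff.2 (mul_pos (hc i) hx)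
  have hsy : 0 < Real.sinh (c i * y) := Real.sinh_pos_iff.2 (mul_pos (hc i) (lt_of_lt_of_le hx hxy))
  rw [div_le_div_iff₀ hsy hsx]
  have hsub : 0 ≤ Real.sinh (c i * y - c i * x) := by
    rw [Real.sinh_nonneg_iff]
    nlinarith [hc i]
  rw [Real.sinh_sub] at hsub
  nlinarith [hc i, Real.cosh_pos (c i * x), Real.cosh_pos (c i * y)]

lemma jfun_anti {r : ℕ} {c : Fin r → ℝ} (hc : ∀ i, 0 < c i) :
    ∀ ⦃x y : ℝ⦄, 0 < x → x ≤ y → jfun r c y ≤ jfun r c x := by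
  intro x y hx hxy
  unfold jfun
  apply neg_le_neg
  apply Real.log_le_log (Jfun_pos hc hx)
  apply Finset.prod_le_prod
  · exact fun i _ => (Real.sinh_pos_iff.2 (mul_pos (hc i) hx)).le
  · exact fun i _ => Real.sinh_le_sinh.2 (by nlinarith [hc i])

lemma jdfun_lt {r : ℕ} (hr : 1 ≤ r) {c : Fin r → ℝ} (hc : ∀ i, 0 < c i) {x : ℝ} (hx : 0 < x) :
    jdfun r c x < -∑ i, c i := by
  unfold jdfun
  apply neg_lt_neg
  apply Finset.sum_lt_sum_of_nonempty
  · haveI : Nonempty (Fin r) := Fin.pos_iff_nonempty.1 hr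
    exact Finset.univ_nonempty
  · intro i _
    have hsx : 0 < Real.sinh (c i * x) := Real.sinh_pos_iff.2 (mul_pos (hc i) hx)
    rw [lt_div_iff₀ hsx]
    have h := Real.cosh_sub_sinh (c i * x)
    nlinarith [Real.exp_pos (-(c i * x)), hc i]

lemma continuousOn_jdfun {r : ℕ} {c : Fin r → ℝ} (hc : ∀ i, 0 < c i) :
    ContinuousOn (jdfun r c) (Ioi 0) := by
  unfold jdfun
  apply ContinuousOn.neg
  apply continuousOn_finset_sum
  intro i _
  apply ContinuousOn.div
  · exact ((Real.continuous_cosh.comp (continuous_const.mul continuous_id)).mul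
      continuous_const).continuousOn
  · exact (Real.continuous_sinh.comp (continuous_const.mul continuous_id)).continuousOn
  · exact fun x hx => (Real.sinh_pos_iff.2 (mul_pos (hc i) hx)).ne'

set_option maxHeartbeats 2000000 in
lemma key (r : ℕ) (hr : 1 ≤ r) (c : Fin r → ℝ) (hc : ∀ i, 0 < c i)
    (lam : ℝ) (hlam1 : 1 < lam) (hlamc : ∑ i, c i = 2 * (lam - 1))
    (v : ℝ → ℝ)
    (hvpos : ∀ p ∈ Set.Ioo (0:ℝ) lam, 0 < v p)
    (hvc : Continuous v)
    (VB : ℝ) (hVBpos : 0 < VB) (hVB : ∀ p ∈ Set.Icc (0:ℝ) lam, v p ≤ VB)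
    (vm : ℝ) (hvmpos : 0 < vm) (hvm : ∀ p ∈ Set.Icc ((lam-1)/2) (lam-1), vm ≤ v p)
    (s : ℝ) (hs0 : 0 ≤ s) (hs1 : s < 1)
    (u : ℝ → ℝ) (husol : IsSolution r c v lam s u)
    (X M Y D : ℝ)
    (hX : 0 < X) (hmin : ∀ x, 0 < x → M ≤ 2 * u x + jfun r c x)
    (hM : M = 2 * u X + jfun r c X)
    (hD : 0 ≤ D)
    (hset : Set.Icc (Y - D) (Y + D) = {x : ℝ | 0 < x ∧ 2 * u x + jfun r c x ≤ M + 1}) :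
    -(2*lam + Real.log (VB * lam)) ≤ M ∧
      M ≤ Real.log (36 * VB * Real.exp 1 / (vm * ((lam-1)/2))^2) := by
  obtain ⟨hsm, heven, hu2pos, himg, hode⟩ := husol
  have hinfty : ContDiff ℝ ∞ u := hsm.of_le (by simp)
  have hdu : Differentiable ℝ u := (contDiff_infty_iff_deriv.mp hinfty).1
  have hu1sm : ContDiff ℝ ∞ (deriv u) := (contDiff_infty_iff_deriv.mp hinfty).2
  have hdu1 : Differentiable ℝ (deriv u) := (contDiff_infty_iff_deriv.mp hu1sm).1
  have hu1cont : Continuous (deriv u) := hdu1.continuous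
  have hu2cont : Continuous (deriv (deriv u)) := (contDiff_infty_iff_deriv.mp hu1sm).2.continuous
  have hu1mono : StrictMono (deriv u) := strictMono_of_deriv_pos hu2pos
  have hls : 0 < lam - s := by linarith
  have hmem : ∀ x : ℝ, 0 ≤ x → 0 ≤ deriv u x ∧ deriv u x < lam - s := by
    intro x hx
    have h1 : deriv u x ∈ Set.Ico 0 (lam - s) := himg ▸ Set.mem_image_of_mem _ hx
    exact ⟨h1.1, h1.2⟩
  have hu10 : deriv u 0 = 0 := by
    have h0 : (0:ℝ) ∈ deriv u '' Set.Ici 0 := by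
      rw [himg]; exact Set.mem_Ico.2 ⟨le_rfl, hls⟩
    obtain ⟨t, ht, hdt⟩ := h0
    rcases eq_or_lt_of_le (Set.mem_Ici.1 ht : (0:ℝ) ≤ t) with h | h
    · rw [← h] at hdt; exact hdt
    · have h2 := hu1mono h
      rw [hdt] at h2
      have h3 := (hmem 0 le_rfl).1
      linarith
  have hsurj : ∀ p : ℝ, 0 ≤ p → p < lam - s → ∃ t : ℝ, 0 ≤ t ∧ deriv u t = p := by
    intro p h1 h2
    have h3 : p ∈ deriv u '' Set.Ici 0 := by rw [himg]; exact Set.mem_Ico.2 ⟨h1, h2⟩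
    obtain ⟨t, ht, hdt⟩ := h3
    exact ⟨t, ht, hdt⟩
  have hu1nonneg : ∀ x : ℝ, 0 ≤ x → 0 ≤ deriv u x := fun x hx => (hmem x hx).1
  have hu1lam : ∀ x : ℝ, 0 ≤ x → deriv u x ≤ lam :=
    fun x hx => le_of_lt (lt_of_lt_of_le (hmem x hx).2 (by linarith))
  have hvB' : ∀ x : ℝ, 0 ≤ x → v (deriv u x) ≤ VB :=
    fun x hx => hVB _ ⟨hu1nonneg x hx, hu1lam x hx⟩
  set g : ℝ → ℝ := fun x => deriv (deriv u) x * v (deriv u x) with hgdef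
  have hgc : Continuous g := hu2cont.mul (hvc.comp hu1cont)
  have hnu : ∀ x : ℝ, 0 < x → g x = Real.exp (-(2 * u x + jfun r c x)) := by
    intro x hx
    have hJ : 0 < Jfun r c x := Jfun_pos hc hx
    have h1 : Real.exp (-(2 * u x + jfun r c x)) = Real.exp (-(2 * u x)) * Jfun r c x := by
      rw [show -(2 * u x + jfun r c x) = -(2 * u x) + Real.log (Jfun r c x) by
        unfold jfun; ring, Real.exp_add, Real.exp_log hJ]
    rw [h1]
    exact hode x hx
  have hIu2 : ∀ a b : ℝ, (∫ t in a..b, deriv (deriv u) t) = deriv u b - deriv u a := by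
    intro a b
    exact intervalIntegral.integral_deriv_eq_sub (fun t _ => hdu1 t) (hu2cont.intervalIntegrable a b)
  have hIu1 : ∀ a b : ℝ, (∫ t in a..b, deriv u t) = u b - u a := by
    intro a b
    exact intervalIntegral.integral_deriv_eq_sub (fun t _ => hdu t) (hu1cont.intervalIntegrable a b)
  -- lower bound chain
  have hchainA : Real.exp (-(M + 2*lam)) ≤ VB * lam := by
    have huLip : ∀ x : ℝ, X ≤ x → u x ≤ u X + lam * (x - X) := by
      intro x hx
      have h1 : (∫ t in X..x, deriv u t) ≤ ∫ t in X..x, lam := by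
        apply intervalIntegral.integral_mono_on hx (hu1cont.intervalIntegrable (μ := volume) _ _)
          (continuous_const.intervalIntegrable (μ := volume) _ _)
        intro t ht
        exact hu1lam t (le_trans hX.le ht.1)
      rw [hIu1, intervalIntegral.integral_const, smul_eq_mul] at h1
      linarith
    have hnuup : ∀ x : ℝ, x ∈ Set.Icc X (X+1) → Real.exp (-(M + 2*lam)) ≤ g x := by
      intro x hx
      rw [hnu x (lt_of_lt_of_le hX hx.1)]
      apply Real.exp_le_exp.2
      have h1 := huLip x hx.1
      have h2 := jfun_anti hc hX hx.1
      have h3 : 2 * u x + jfun r c x ≤ M + 2 * lam := by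
        rw [hM]; nlinarith [hx.2, hlam1]
      linarith
    have hlow : Real.exp (-(M + 2*lam)) ≤ ∫ x in X..(X+1), g x := by
      have h1 := intervalIntegral.integral_mono_on (by linarith : X ≤ X + 1)
        (continuous_const.intervalIntegrable (μ := volume) _ _) (hgc.intervalIntegrable (μ := volume) _ _) hnuup
      rw [intervalIntegral.integral_const, smul_eq_mul] at h1
      have h2 : (X + 1 - X) * Real.exp (-(M + 2*lam)) = Real.exp (-(M + 2*lam)) := by ring
      linarith
    have hup : (∫ x in X..(X+1), g x) ≤ VB * lam := by
      have h1 : (∫ t in X..(X+1), g t) ≤ ∫ t in X..(X+1), VB * deriv (deriv u) t := by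
        apply intervalIntegral.integral_mono_on (by linarith : X ≤ X + 1)
          (hgc.intervalIntegrable (μ := volume) _ _) ((continuous_const.mul hu2cont).intervalIntegrable (μ := volume) _ _)
        intro t ht
        have h2 := hvB' t (le_trans hX.le ht.1)
        have h3 := hu2pos t
        show deriv (deriv u) t * v (deriv u t) ≤ VB * deriv (deriv u) t
        nlinarith
      rw [intervalIntegral.integral_const_mul, hIu2] at h1
      have h4 := (hmem (X+1) (by linarith)).2
      have h5 := hu1nonneg X hX.le
      nlinarith
    linarith
  have hlower : -(2*lam + Real.log (VB * lam)) ≤ M := by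
    have h1 : -(M + 2*lam) ≤ Real.log (VB * lam) :=
      (Real.le_log_iff_exp_le (by positivity)).2 hchainA
    linarith
  refine ⟨hlower, ?_⟩
  -- upper bound
  obtain ⟨E1, hE1def⟩ : ∃ E1 : ℝ, E1 = Y - D := ⟨_, rfl⟩
  obtain ⟨E2, hE2def⟩ : ∃ E2 : ℝ, E2 = Y + D := ⟨_, rfl⟩
  rw [← hE1def, ← hE2def] at hset
  have hIccset : ∀ x : ℝ, x ∈ Set.Icc E1 E2 ↔ (0 < x ∧ 2 * u x + jfun r c x ≤ M + 1) := by
    intro x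
    rw [hset]
    rfl
  have hXI : X ∈ Set.Icc E1 E2 := (hIccset X).2 ⟨hX, by rw [← hM]; linarith⟩
  have hE1E2 : E1 ≤ E2 := hXI.1.trans hXI.2
  have hE1pos : 0 < E1 := ((hIccset E1).1 (Set.mem_Icc.2 ⟨le_rfl, hE1E2⟩)).1
  have hnuI : ∀ x ∈ Set.Icc E1 E2, 2 * u x + jfun r c x ≤ M + 1 :=
    fun x hx => ((hIccset x).1 hx).2
  have hposI : ∀ x ∈ Set.Icc E1 E2, 0 < x := fun x hx => ((hIccset x).1 hx).1
  have hout : ∀ x : ℝ, 0 < x → x ∉ Set.Icc E1 E2 → M + 1 < 2 * u x + jfun r c x := by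
    intro x hx hnx
    by_contra h
    exact hnx ((hIccset x).2 ⟨hx, le_of_not_gt h⟩)
  have hnuD : ∀ x : ℝ, 0 < x → HasDerivAt (fun t => 2 * u t + jfun r c t)
      (2 * deriv u x + jdfun r c x) x := by
    intro x hx
    exact ((hdu x).hasDerivAt.const_mul (2:ℝ)).add (hasDerivAt_jfun hc hx)
  have hDpos : 0 < D := by
    rcases lt_or_eq_of_le hD with h | h
    · exact h
    · exfalso
      have h2D : E2 - E1 = 2 * D := by rw [hE1def, hE2def]; ring
      have hXE : X = E2 := le_antisymm hXI.2 (by linarith [hXI.1])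
      have hcont : ContinuousAt (fun t => 2 * u t + jfun r c t) X := (hnuD X hX).continuousAt
      have hev : ∀ᶠ z in nhds X, (2 * u z + jfun r c z) < M + 1 :=
        hcont.tendsto.eventually_lt_const (by rw [← hM]; linarith)
      have hev2 : ∀ᶠ z in nhds X, 0 < z := eventually_gt_nhds hX
      obtain ⟨ε, hε, hball⟩ := Metric.eventually_nhds_iff.1 (hev.and hev2)
      have hz : X + ε/2 ∈ Set.Icc E1 E2 := by
        have h1 := hball (y := X + ε/2) (by
          rw [Real.dist_eq]
          rw [show X + ε/2 - X = ε/2 by ring, abs_of_pos (by linarith)]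
          linarith)
        exact (hIccset _).2 ⟨h1.2, h1.1.le⟩
      have := hz.2
      rw [← hXE] at this
      linarith
  have hnuMono : ∀ x y : ℝ, 0 < x → x ≤ y →
      2 * deriv u x + jdfun r c x ≤ 2 * deriv u y + jdfun r c y := by
    intro x y hx hxy
    have h1 := jdfun_mono hc hx hxy
    have h2 := hu1mono.monotone hxy
    linarith
  have hIntNu : ∀ a b : ℝ, 0 < a → a ≤ b →
      IntervalIntegrable (fun t => 2 * deriv u t + jdfun r c t) volume a b := by
    intro a b ha hab
    apply ContinuousOn.intervalIntegrable
    apply ContinuousOn.add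
    · exact (continuous_const.mul hu1cont).continuousOn
    · apply (continuousOn_jdfun hc).mono
      rw [Set.uIcc_of_le hab]
      exact fun t ht => lt_of_lt_of_le ha ht.1
  have hFTCnu : ∀ a b : ℝ, 0 < a → a ≤ b →
      (∫ t in a..b, (2 * deriv u t + jdfun r c t)) =
        (2 * u b + jfun r c b) - (2 * u a + jfun r c a) := by
    intro a b ha hab
    apply intervalIntegral.integral_eq_sub_of_hasDerivAt
    · intro t ht
      rw [Set.uIcc_of_le hab] at ht
      exact hnuD t (lt_of_lt_of_le ha ht.1)
    · exact hIntNu a b ha hab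
  have hlocmin : IsLocalMin (fun t => 2 * u t + jfun r c t) X := by
    unfold IsLocalMin IsMinFilter
    filter_upwards [Ioi_mem_nhds hX] with z hz
    calc 2 * u X + jfun r c X = M := hM.symm
      _ ≤ 2 * u z + jfun r c z := hmin z hz
  have hnu'X : 2 * deriv u X + jdfun r c X = 0 := hlocmin.hasDerivAt_eq_zero (hnuD X hX)
  have hu1X : lam - 1 < deriv u X := by
    have h1 := jdfun_lt hr hc hX
    rw [hlamc] at h1
    linarith
  obtain ⟨x₀, hx₀0, hx₀⟩ := hsurj ((lam-1)/2) (by linarith) (by linarith)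
  obtain ⟨x₁, hx₁0, hx₁⟩ := hsurj (lam-1) (by linarith) (by linarith)
  have hx₀pos : 0 < x₀ := by
    rcases eq_or_lt_of_le hx₀0 with h | h
    · exfalso; rw [← h, hu10] at hx₀; linarith
    · exact h
  have hx01 : x₀ < x₁ := hu1mono.lt_iff_lt.1 (by rw [hx₀, hx₁]; linarith)
  have hx1X : x₁ < X := hu1mono.lt_iff_lt.1 (by rw [hx₁]; exact hu1X)
  have hx1E2 : x₁ < E2 := lt_of_lt_of_le hx1X hXI.2
  obtain ⟨κ, hkdef⟩ : ∃ k : ℝ, k = Real.exp (-(M+1)) / VB := ⟨_, rfl⟩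
  have hκpos : 0 < κ := by rw [hkdef]; positivity
  have hkappa : ∀ x ∈ Set.Icc E1 E2, κ ≤ deriv (deriv u) x := by
    intro x hx
    have hxpos := hposI x hx
    have hu1xpos : 0 < deriv u x := by
      have h1 := hu1mono hxpos
      rwa [hu10] at h1
    have hu1xlam : deriv u x < lam := lt_of_lt_of_le (hmem x hxpos.le).2 (by linarith)
    have hvpos' : 0 < v (deriv u x) := hvpos _ ⟨hu1xpos, hu1xlam⟩
    have hge : Real.exp (-(M+1)) ≤ g x := by
      rw [hnu x hxpos]
      apply Real.exp_le_exp.2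
      have h1 := hnuI x hx
      linarith
    have h1 : κ * v (deriv u x) ≤ deriv (deriv u) x * v (deriv u x) := by
      calc κ * v (deriv u x) ≤ κ * VB := by nlinarith [hvB' x hxpos.le]
        _ = Real.exp (-(M+1)) := by rw [hkdef, div_mul_cancel₀ _ hVBpos.ne']
        _ ≤ g x := hge
        _ = deriv (deriv u) x * v (deriv u x) := rfl
    exact le_of_mul_le_mul_right h1 hvpos'
  have hinc : ∀ a b2 : ℝ, a ∈ Set.Icc E1 E2 → b2 ∈ Set.Icc E1 E2 → a ≤ b2 →
      κ * (b2 - a) ≤ deriv u b2 - deriv u a := by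
    intro a b2 ha hb hab
    have h1 : (∫ t in a..b2, κ) ≤ ∫ t in a..b2, deriv (deriv u) t := by
      apply intervalIntegral.integral_mono_on hab (continuous_const.intervalIntegrable (μ := volume) _ _)
        (hu2cont.intervalIntegrable (μ := volume) _ _)
      intro t ht
      exact hkappa t ⟨le_trans ha.1 ht.1, le_trans ht.2 hb.2⟩
    rw [hIu2, intervalIntegral.integral_const, smul_eq_mul] at h1
    linarith
  have hlin : ∀ a b2 : ℝ, (∫ t in a..b2, 2 * κ * (t - X)) = κ * (b2-X)^2 - κ * (a-X)^2 := by
    intro a b2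
    rw [intervalIntegral.integral_const_mul,
      intervalIntegral.integral_comp_sub_right (fun t => t) X, integral_id]
    ring
  have hquad : κ * D^2 ≤ 1 := by
    have hcases : D ≤ E2 - X ∨ D ≤ X - E1 := by
      by_contra hcon
      push_neg at hcon
      have h1 : E2 - E1 = 2 * D := by rw [hE1def, hE2def]; ring
      linarith [hcon.1, hcon.2]
    rcases hcases with hside | hside
    · have hXE2 : X ≤ E2 := hXI.2
      have hpt : ∀ t ∈ Set.Icc X E2, 2 * κ * (t - X) ≤ 2 * deriv u t + jdfun r c t := by
        intro t ht
        have htI : t ∈ Set.Icc E1 E2 := ⟨le_trans hXI.1 ht.1, ht.2⟩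
        have h1 := hinc X t hXI htI ht.1
        have h2 := jdfun_mono hc hX ht.1
        linarith [hnu'X]
      have h3 : (∫ t in X..E2, 2 * κ * (t - X)) ≤
          ∫ t in X..E2, (2 * deriv u t + jdfun r c t) := by
        apply intervalIntegral.integral_mono_on hXE2
          ((continuous_const.mul (continuous_id.sub continuous_const)).intervalIntegrable (μ := volume) _ _)
          (hIntNu X E2 hX hXE2) hpt
      rw [hlin X E2, hFTCnu X E2 hX hXE2, ← hM, sub_self X] at h3
      norm_num at h3
      have h4 : 2 * u E2 + jfun r c E2 ≤ M + 1 := hnuI E2 (Set.mem_Icc.2 ⟨hE1E2, le_rfl⟩)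
      have h5 : D^2 ≤ (E2 - X)^2 := pow_le_pow_left₀ hD hside 2
      have h6 := mul_le_mul_of_nonneg_left h5 hκpos.le
      linarith
    · have hE1X : E1 ≤ X := hXI.1
      have hpt : ∀ t ∈ Set.Icc E1 X, 2 * deriv u t + jdfun r c t ≤ 2 * κ * (t - X) := by
        intro t ht
        have htI : t ∈ Set.Icc E1 E2 := ⟨ht.1, le_trans ht.2 hXI.2⟩
        have htpos := hposI t htI
        have h1 := hinc t X htI hXI ht.2
        have h2 := jdfun_mono hc htpos ht.2
        linarith [hnu'X]
      have h3 : (∫ t in E1..X, (2 * deriv u t + jdfun r c t)) ≤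
          ∫ t in E1..X, 2 * κ * (t - X) := by
        apply intervalIntegral.integral_mono_on hE1X (hIntNu E1 X hE1pos hE1X)
          ((continuous_const.mul (continuous_id.sub continuous_const)).intervalIntegrable (μ := volume) _ _) hpt
      rw [hlin E1 X, hFTCnu E1 X hE1pos hE1X, ← hM, sub_self X] at h3
      norm_num at h3
      have h4 : 2 * u E1 + jfun r c E1 ≤ M + 1 := hnuI E1 (Set.mem_Icc.2 ⟨le_rfl, hE1E2⟩)
      have h5 : D^2 ≤ (X - E1)^2 := pow_le_pow_left₀ hD hside 2
      have h6 := mul_le_mul_of_nonneg_left h5 hκpos.le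
      linarith
  have hVminLB : vm * ((lam-1)/2) ≤ ∫ t in x₀..x₁, g t := by
    have hpt : ∀ t ∈ Set.Icc x₀ x₁, vm * deriv (deriv u) t ≤ g t := by
      intro t ht
      have h1 : (lam-1)/2 ≤ deriv u t := by rw [← hx₀]; exact hu1mono.monotone ht.1
      have h2 : deriv u t ≤ lam - 1 := by rw [← hx₁]; exact hu1mono.monotone ht.2
      have h3 := hvm (deriv u t) ⟨h1, h2⟩
      have h4 := hu2pos t
      calc vm * deriv (deriv u) t ≤ v (deriv u t) * deriv (deriv u) t :=
            mul_le_mul_of_nonneg_right h3 h4.le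
        _ = deriv (deriv u) t * v (deriv u t) := mul_comm _ _
    have h3 := intervalIntegral.integral_mono_on hx01.le
      ((continuous_const.mul hu2cont).intervalIntegrable (μ := volume) _ _) (hgc.intervalIntegrable (μ := volume) _ _) hpt
    simp only [Pi.mul_apply] at h3
    rw [intervalIntegral.integral_const_mul, hIu2, hx₀, hx₁] at h3
    have h5 : vm * ((lam-1)/2) = vm * ((lam-1) - (lam-1)/2) := by ring
    linarith
  obtain ⟨q, hqdef⟩ : ∃ q : ℝ, q = min x₁ (max x₀ (E1 - D)) := ⟨_, rfl⟩
  have hq0 : x₀ ≤ q := by rw [hqdef]; exact le_min hx01.le (le_max_left _ _)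
  have hq1 : q ≤ x₁ := by rw [hqdef]; exact min_le_left _ _
  have hsplitInt : (∫ t in x₀..x₁, g t) = (∫ t in x₀..q, g t) + ∫ t in q..x₁, g t :=
    (intervalIntegral.integral_add_adjacent_intervals (hgc.intervalIntegrable (μ := volume) _ _)
      (hgc.intervalIntegrable (μ := volume) _ _)).symm
  have hpart2 : (∫ t in q..x₁, g t) ≤ Real.exp (-M) * (3*D) := by
    have hpt : ∀ t ∈ Set.Icc q x₁, g t ≤ Real.exp (-M) := by
      intro t ht
      have htpos : 0 < t := lt_of_lt_of_le hx₀pos (le_trans hq0 ht.1)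
      rw [hnu t htpos]
      exact Real.exp_le_exp.2 (by linarith [hmin t htpos])
    have h3 := intervalIntegral.integral_mono_on hq1 (hgc.intervalIntegrable (μ := volume) _ _)
      (continuous_const.intervalIntegrable (μ := volume) _ _) hpt
    rw [intervalIntegral.integral_const, smul_eq_mul] at h3
    have hlen : x₁ - q ≤ 3 * D := by
      rcases le_total x₁ (max x₀ (E1 - D)) with h | h
      · have hqe : q = x₁ := by rw [hqdef]; exact min_eq_left h
        rw [hqe]; linarith
      · have hqe : q = max x₀ (E1 - D) := by rw [hqdef]; exact min_eq_right h
        have h1 : E1 - D ≤ q := by rw [hqe]; exact le_max_right _ _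
        have h2 : E2 = E1 + 2*D := by rw [hE1def, hE2def]; ring
        linarith [hx1E2]
    have h4 := mul_le_mul_of_nonneg_right hlen (Real.exp_pos (-M)).le
    linarith
  have hpart1 : (∫ t in x₀..q, g t) ≤ Real.exp (-M) * (3*D) := by
    rcases eq_or_lt_of_le hq0 with heq | hlt
    · rw [← heq, intervalIntegral.integral_same]
      positivity
    · have hqW : q ≤ E1 - D := by
        rcases le_total x₁ (max x₀ (E1 - D)) with h | h
        · have hqe : q = x₁ := by rw [hqdef]; exact min_eq_left h
          rcases max_cases x₀ (E1 - D) with ⟨he, _⟩ | ⟨he, _⟩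
          · exfalso; rw [he] at h; rw [hqe] at hlt; linarith
          · rw [he] at h; rw [hqe]; exact h
        · have hqe : q = max x₀ (E1 - D) := by rw [hqdef]; exact min_eq_right h
          rcases max_cases x₀ (E1 - D) with ⟨he, _⟩ | ⟨he, _⟩
          · exfalso; rw [hqe, he] at hlt; exact lt_irrefl _ hlt
          · rw [hqe, he]
      have hWpos : 0 < E1 - D := lt_of_lt_of_le (lt_trans hx₀pos hlt) hqW
      have hWX : E1 - D < X := by linarith [hXI.1]
      have hWnotin : (E1 - D) ∉ Set.Icc E1 E2 := by
        intro hmem'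
        have h0 := hmem'.1
        linarith
      have hnuW : M + 1 < 2 * u (E1-D) + jfun r c (E1-D) := hout _ hWpos hWnotin
      have h2D : E2 = E1 + 2*D := by rw [hE1def, hE2def]; ring
      have hXW3D : X - (E1-D) ≤ 3 * D := by linarith [hXI.2]
      have hD3 : (0:ℝ) < 3*D := by linarith
      have hslope : (2 * deriv u (E1-D) + jdfun r c (E1-D)) * (X - (E1-D)) ≤ -1 := by
        have hptW : ∀ t ∈ Set.Icc (E1-D) X,
            (2 * deriv u (E1-D) + jdfun r c (E1-D)) ≤ 2 * deriv u t + jdfun r c t :=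
          fun t ht => hnuMono (E1-D) t hWpos ht.1
        have h3 := intervalIntegral.integral_mono_on hWX.le
          (continuous_const.intervalIntegrable (μ := volume) _ _)
          (hIntNu (E1-D) X hWpos hWX.le) hptW
        rw [hFTCnu (E1-D) X hWpos hWX.le, ← hM, intervalIntegral.integral_const,
          smul_eq_mul] at h3
        linarith [hnuW]
      have hslope' : 2 * deriv u (E1-D) + jdfun r c (E1-D) ≤ -(1/(3*D)) := by
        have hXWpos : 0 < X - (E1-D) := by linarith
        have h1 : 2 * deriv u (E1-D) + jdfun r c (E1-D) ≤ -1 / (X - (E1-D)) := by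
          rw [le_div_iff₀ hXWpos]
          linarith [hslope]
        have h4 : 1/(3*D) ≤ 1/(X - (E1-D)) := one_div_le_one_div_of_le hXWpos hXW3D
        have h5 : -1 / (X - (E1-D)) = -(1 / (X - (E1-D))) := by ring
        linarith
      have htail : ∀ t ∈ Set.Icc x₀ q, g t ≤ Real.exp (-(M+1) + (t - q)/(3*D)) := by
        intro t ht
        have htpos : 0 < t := lt_of_lt_of_le hx₀pos ht.1
        have htW : t ≤ E1 - D := le_trans ht.2 hqW
        have hptW : ∀ z ∈ Set.Icc t (E1-D),
            2 * deriv u z + jdfun r c z ≤ 2 * deriv u (E1-D) + jdfun r c (E1-D) :=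
          fun z hz => hnuMono z (E1-D) (lt_of_lt_of_le htpos hz.1) hz.2
        have h3 := intervalIntegral.integral_mono_on htW (hIntNu t (E1-D) htpos htW)
          (continuous_const.intervalIntegrable (μ := volume) _ _) hptW
        rw [hFTCnu t (E1-D) htpos htW, intervalIntegral.integral_const, smul_eq_mul] at h3
        have h4 : ((E1-D) - t) * (2 * deriv u (E1-D) + jdfun r c (E1-D)) ≤
            ((E1-D) - t) * (-(1/(3*D))) :=
          mul_le_mul_of_nonneg_left hslope' (by linarith [ht.2])
        rw [hnu t htpos]
        apply Real.exp_le_exp.2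
        have h5 : (q - t) / (3*D) ≤ ((E1-D) - t) / (3*D) :=
          (div_le_div_iff_of_pos_right hD3).2 (by linarith)
        have h7 : ((E1-D) - t) * (-(1/(3*D))) = -(((E1-D) - t)/(3*D)) := by ring
        have h6 : M + 1 + ((E1-D) - t)/(3*D) ≤ 2 * u t + jfun r c t := by
          linarith [hnuW, h3, h4]
        have h8 : (t - q)/(3*D) = -((q - t)/(3*D)) := by ring
        linarith
      have hexpcont : Continuous fun t : ℝ => Real.exp (-(M+1) + (t - q)/(3*D)) :=
        Real.continuous_exp.comp
          (continuous_const.add ((continuous_id.sub continuous_const).div_const _))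
      have hF : ∀ t : ℝ, HasDerivAt (fun z : ℝ => 3*D*Real.exp (-(M+1) + (z - q)/(3*D)))
          (Real.exp (-(M+1) + (t - q)/(3*D))) t := by
        intro t
        have h1 : HasDerivAt (fun z : ℝ => -(M+1) + (z - q)/(3*D)) (1/(3*D)) t := by
          simpa using (((hasDerivAt_id t).sub_const q).div_const (3*D)).const_add (-(M+1))
        have h2 := (h1.exp).const_mul (3*D)
        refine h2.congr_deriv ?_
        rw [mul_comm (Real.exp _), ← mul_assoc, mul_one_div_cancel hD3.ne', one_mul]
      have hIexp : (∫ t in x₀..q, Real.exp (-(M+1) + (t - q)/(3*D))) ≤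
          3*D*Real.exp (-(M+1)) := by
        rw [intervalIntegral.integral_eq_sub_of_hasDerivAt (fun t _ => hF t)
          (hexpcont.intervalIntegrable (μ := volume) _ _)]
        have h1 : -(M+1) + (q - q)/(3*D) = -(M+1) := by
          rw [sub_self, zero_div, add_zero]
        rw [h1]
        have h2 : (0:ℝ) ≤ 3*D*Real.exp (-(M+1) + (x₀ - q)/(3*D)) := by positivity
        linarith
      have h7 := intervalIntegral.integral_mono_on hq0
        (hgc.intervalIntegrable (μ := volume) _ _)
        (hexpcont.intervalIntegrable (μ := volume) _ _) htail
      have h8 : Real.exp (-(M+1)) ≤ Real.exp (-M) := Real.exp_le_exp.2 (by linarith)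
      calc (∫ t in x₀..q, g t) ≤ _ := h7
        _ ≤ 3*D*Real.exp (-(M+1)) := hIexp
        _ ≤ Real.exp (-M) * (3*D) := by
            have h9 := mul_le_mul_of_nonneg_left h8 (by linarith : (0:ℝ) ≤ 3*D)
            linarith
  have hmain : vm * ((lam-1)/2) ≤ Real.exp (-M) * (6*D) := by
    linarith [hpart1, hpart2, hVminLB, hsplitInt]
  have hquad' : Real.exp (-(M+1)) * D^2 ≤ VB := by
    rw [hkdef, div_mul_eq_mul_div, div_le_one hVBpos] at hquad
    exact hquad
  have hEF : Real.exp (-(M+1)) * Real.exp (M+1) = 1 := by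
    rw [← Real.exp_add, show -(M+1) + (M+1) = 0 by ring, Real.exp_zero]
  have hD2 : D^2 ≤ VB * Real.exp (M+1) := by
    have h1 := mul_le_mul_of_nonneg_right hquad' (Real.exp_pos (M+1)).le
    calc D^2 = Real.exp (-(M+1)) * D^2 * Real.exp (M+1) := by
          rw [mul_comm (Real.exp (-(M+1))) (D^2), mul_assoc, hEF, mul_one]
      _ ≤ VB * Real.exp (M+1) := h1
  have hApos : 0 < vm * ((lam-1)/2) := by
    have h0 : 0 < (lam-1)/2 := by linarith
    exact mul_pos hvmpos h0
  have hfinal : Real.exp M ≤ 36 * VB * Real.exp 1 / (vm * ((lam-1)/2))^2 := by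
    rw [le_div_iff₀ (pow_pos hApos 2)]
    have hmain' : vm * ((lam-1)/2) ≤ Real.exp (-M) * (6*D) := hmain
    have h2 : (vm*((lam-1)/2))^2 ≤ (Real.exp (-M)*(6*D))^2 :=
      pow_le_pow_left₀ hApos.le hmain' 2
    have h4 : 36 * D^2 * (Real.exp (-M))^2 ≤
        36 * (VB * Real.exp (M+1)) * (Real.exp (-M))^2 := by
      have h0 := mul_le_mul_of_nonneg_right hD2 (sq_nonneg (Real.exp (-M)))
      linarith
    have h6 : Real.exp M * (vm*((lam-1)/2))^2 ≤
        Real.exp M * (36 * (VB * Real.exp (M+1)) * (Real.exp (-M))^2) := by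
      apply mul_le_mul_of_nonneg_left _ (Real.exp_pos M).le
      calc (vm*((lam-1)/2))^2 ≤ (Real.exp (-M)*(6*D))^2 := h2
        _ = 36 * D^2 * (Real.exp (-M))^2 := by ring
        _ ≤ 36 * (VB * Real.exp (M+1)) * (Real.exp (-M))^2 := h4
    have hE3 : Real.exp M * (Real.exp (M+1) * (Real.exp (-M))^2) = Real.exp 1 := by
      rw [sq, ← Real.exp_add, ← Real.exp_add, ← Real.exp_add, Real.exp_eq_exp]
      ring
    calc Real.exp M * (vm * ((lam-1)/2))^2
        ≤ Real.exp M * (36 * (VB * Real.exp (M+1)) * (Real.exp (-M))^2) := h6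
      _ = 36 * VB * (Real.exp M * (Real.exp (M+1) * (Real.exp (-M))^2)) := by ring
      _ = 36 * VB * Real.exp 1 := by rw [hE3]
  exact (Real.le_log_iff_exp_le (div_pos (by positivity) (pow_pos hApos 2))).2 hfinal

theorem min_value_bound
    (r : ℕ) (hr : 1 ≤ r) (c : Fin r → ℝ) (hc : ∀ i, 0 < c i)
    (lam : ℝ) (hlam : lam = 1 + (1/2) * ∑ i, c i)
    (v : ℝ → ℝ) (m : ℕ) (A : ℝ) (hA : 0 < A) (a bk : Fin m → ℝ)
    (hbk : ∀ k, bk k ≠ 0)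
    (hv : ∀ p, v p = A * p ^ r * ∏ k, (bk k - a k * p))
    (hvpos : ∀ p ∈ Set.Ioo (0:ℝ) lam, 0 < v p)
    (b : ℝ) (hb : b ∈ Set.Ioc (0:ℝ) 1)
    (u : ℝ → ℝ → ℝ) (hu : ∀ s ∈ Set.Ico (0:ℝ) b, IsSolution r c v lam s (u s))
    (xs ms ys ds : ℝ → ℝ)
    (hxs : ∀ s ∈ Set.Ico (0:ℝ) b, xs s ∈ Set.Ioi (0:ℝ) ∧
      ∀ x ∈ Set.Ioi (0:ℝ), ms s ≤ 2 * u s x + jfun r c x)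
    (hms : ∀ s ∈ Set.Ico (0:ℝ) b, ms s = 2 * u s (xs s) + jfun r c (xs s))
    (hds : ∀ s ∈ Set.Ico (0:ℝ) b, 0 ≤ ds s ∧
      Set.Icc (ys s - ds s) (ys s + ds s) =
        {x : ℝ | 0 < x ∧ 2 * u s x + jfun r c x ≤ ms s + 1}) :
    ∃ Cm > (0:ℝ), ∀ s ∈ Set.Ico (0:ℝ) b, |ms s| ≤ Cm := by
  haveI : Nonempty (Fin r) := Fin.pos_iff_nonempty.1 hr
  have hcsum : 0 < ∑ i, c i := Finset.sum_pos (fun i _ => hc i) Finset.univ_nonempty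
  have hlam1 : 1 < lam := by rw [hlam]; linarith
  have hlamc : ∑ i, c i = 2 * (lam - 1) := by rw [hlam]; ring
  have hvc : Continuous v := by
    have h1 : Continuous fun p : ℝ => A * p ^ r * ∏ k, (bk k - a k * p) := by
      apply Continuous.mul
      · exact continuous_const.mul (continuous_pow r)
      · exact continuous_finset_prod _ fun k _ =>
          continuous_const.sub (continuous_const.mul continuous_id)
    exact h1.congr fun p => (hv p).symm
  obtain ⟨pB, hpBmem, hpBmax⟩ := isCompact_Icc.exists_isMaxOn
    (Set.nonempty_Icc.2 (by linarith : (0:ℝ) ≤ lam)) hvc.continuousOn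
  have hVBpos : (0:ℝ) < max (v pB) 1 := lt_of_lt_of_le zero_lt_one (le_max_right _ _)
  have hVB : ∀ p ∈ Set.Icc (0:ℝ) lam, v p ≤ max (v pB) 1 :=
    fun p hp => le_trans (isMaxOn_iff.1 hpBmax p hp) (le_max_left _ _)
  obtain ⟨pm, hpmmem, hpmmin⟩ := isCompact_Icc.exists_isMinOn
    (Set.nonempty_Icc.2 (by linarith : (lam-1)/2 ≤ lam-1)) hvc.continuousOn
  have hvmpos : 0 < v pm := hvpos pm ⟨by linarith [hpmmem.1], by linarith [hpmmem.2]⟩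
  have hvm : ∀ p ∈ Set.Icc ((lam-1)/2) (lam-1), v pm ≤ v p :=
    fun p hp => isMinOn_iff.1 hpmmin p hp
  refine ⟨max (2*lam + Real.log (max (v pB) 1 * lam))
    (Real.log (36 * max (v pB) 1 * Real.exp 1 / (v pm * ((lam-1)/2))^2)) + 1, ?_, ?_⟩
  · have h1 : (1:ℝ) ≤ max (v pB) 1 * lam := by
      nlinarith [le_max_right (v pB) 1]
    have h2 : 0 ≤ Real.log (max (v pB) 1 * lam) := Real.log_nonneg h1
    have h3 := le_max_left (2*lam + Real.log (max (v pB) 1 * lam))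
      (Real.log (36 * max (v pB) 1 * Real.exp 1 / (v pm * ((lam-1)/2))^2))
    linarith
  · intro s hs
    obtain ⟨hxs1, hxs2⟩ := hxs s hs
    have hkey := key r hr c hc lam hlam1 hlamc v hvpos hvc (max (v pB) 1) hVBpos hVB
      (v pm) hvmpos hvm s hs.1 (lt_of_lt_of_le hs.2 hb.2) (u s) (hu s hs)
      (xs s) (ms s) (ys s) (ds s) hxs1
      (fun x hx => hxs2 x hx) (hms s hs) (hds s hs).1 (hds s hs).2
    rw [abs_le]
    constructor
    · have h1 := hkey.1
      have h2 := le_max_left (2*lam + Real.log (max (v pB) 1 * lam))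
        (Real.log (36 * max (v pB) 1 * Real.exp 1 / (v pm * ((lam-1)/2))^2))
      linarith
    · have h1 := hkey.2
      have h2 := le_max_right (2*lam + Real.log (max (v pB) 1 * lam))
        (Real.log (36 * max (v pB) 1 * Real.exp 1 / (v pm * ((lam-1)/2))^2))
      linarith
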